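/- Let Σ = (G, σ) be a 2-connected compatible signed graph of order m. Then the n-th power signed graph Σ^n is balanced if and only if the adjacency matrix of the associated signed complete graph K^{D^±}(Σ) has spectrum {m−1 with multiplicity 1, −1 with multiplicity m−1}. -/

import Mathlib

open SimpleGraph Polynomial

variable {V : Type*}

/-- The sign of a walk: the product of the signs of its edges. -/
def walkSign {G : SimpleGraph V} (sg : V → V → ℤ) {u v : V} (p : G.Walk u v) : ℤ :=
  (p.darts.map fun d => sg d.toProd.1 d.toProd.2).prod

/-- `sigmaMax G sg u v`: the maximum sign over all shortest `u`–`v` paths. -/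
noncomputable def sigmaMax (G : SimpleGraph V) (sg : V → V → ℤ) (u v : V) : ℤ := by
  classical
  exact if ∃ p : G.Walk u v, p.length = G.dist u v ∧ walkSign sg p = 1 then 1 else -1

/-- `sigmaMin G sg u v`: the minimum sign over all shortest `u`–`v` paths. -/
noncomputable def sigmaMin (G : SimpleGraph V) (sg : V → V → ℤ) (u v : V) : ℤ := by
  classical
  exact if ∃ p : G.Walk u v, p.length = G.dist u v ∧ walkSign sg p = -1 then -1 else 1

/-- `u` and `v` are distance-compatible: all shortest `u`–`v` paths have the same sign. -/
def pairCompatible (G : SimpleGraph V) (sg : V → V → ℤ) (u v : V) : Prop :=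
  ∀ p q : G.Walk u v, p.length = G.dist u v → q.length = G.dist u v →
    walkSign sg p = walkSign sg q

/-- The `n`-th power graph: `u ~ v` iff `u ≠ v` and `d(u,v) ≤ n`. -/
def powerGraph (G : SimpleGraph V) (n : ℕ) : SimpleGraph V where
  Adj u v := u ≠ v ∧ G.dist u v ≤ n
  symm := by
    constructor
    intro u v h
    exact ⟨h.1.symm, by rw [SimpleGraph.dist_comm]; exact h.2⟩
  loopless := by
    constructor
    intro u h
    exact h.1 rfl

/-- A signed graph is balanced if every cycle has positive sign. -/
def SBalanced (G : SimpleGraph V) (sg : V → V → ℤ) : Prop :=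
  ∀ ⦃u : V⦄ (p : G.Walk u u), p.IsCycle → walkSign sg p = 1

/-- 2-connectedness: at least 3 vertices and deleting any vertex leaves a connected graph. -/
def TwoConnected [Fintype V] (G : SimpleGraph V) : Prop :=
  3 ≤ Fintype.card V ∧ ∀ v : V, ((⊤ : G.Subgraph).deleteVerts {v}).coe.Connected

/-- Signature of the associated signed complete graph `K^{D^max}(Σ)`:
edges of `G` keep their sign, non-adjacent pairs get `sigmaMax`. -/
noncomputable def kSigMax (G : SimpleGraph V) (sg : V → V → ℤ) (u v : V) : ℤ := by
  classical
  exact if G.Adj u v then sg u v else sigmaMax G sg u v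

/-- Signature of the associated signed complete graph `K^{D^min}(Σ)`. -/
noncomputable def kSigMin (G : SimpleGraph V) (sg : V → V → ℤ) (u v : V) : ℤ := by
  classical
  exact if G.Adj u v then sg u v else sigmaMin G sg u v

/-!
Compatibility makes `sigmaMax G sg u v` the sign of every shortest `u`–`v` path, so `Σⁿ` carries
`sg` on the edges of `G` and `kSigMax = sigmaMax`. If `Σⁿ` is balanced, every closed walk of
`Σⁿ`, in particular every closed walk of `G`, is positive; hence `sg u v = f u * f v` for a
`±1`-valued `f`, and the adjacency matrix of `K^{D^±}(Σ)` is `f fᵀ - 1`, with eigenvalues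
`m - 1` (once) and `-1`. Conversely, for a symmetric matrix with that spectrum, `J = A + 1`
satisfies `J² = m J`; as `J` has `±1` entries, each of the `m` terms of `(J²)ᵤᵥ` must equal
`Jᵤᵥ`, so `Jᵤᵥ = J_{v₀u} J_{v₀v}` and `Σⁿ` is balanced.
-/

open Matrix

section WalkSign

variable {G H : SimpleGraph V} {s t : V → V → ℤ} {u v w : V}

@[simp]
theorem walkSign_nil : walkSign s (Walk.nil : G.Walk u u) = 1 := rfl

@[simp]
theorem walkSign_cons (h : G.Adj u v) (p : G.Walk v w) :
    walkSign s (Walk.cons h p) = s u v * walkSign s p := by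
  simp [walkSign]

theorem walkSign_append (p : G.Walk u v) (q : G.Walk v w) :
    walkSign s (p.append q) = walkSign s p * walkSign s q := by
  simp [walkSign, Walk.darts_append]

theorem walkSign_reverse (hsym : ∀ u v, s u v = s v u) (p : G.Walk u v) :
    walkSign s p.reverse = walkSign s p := by
  induction p with
  | nil => rfl
  | cons h p ih => simp [walkSign_append, ih, hsym, mul_comm]

theorem isUnit_walkSign (hs : ∀ ⦃u v⦄, G.Adj u v → IsUnit (s u v)) (p : G.Walk u v) :
    IsUnit (walkSign s p) := by
  induction p with
  | nil => exact isUnit_one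
  | cons h p ih => simpa using (hs h).mul ih

theorem walkSign_mapLe (hle : G ≤ H) (hst : ∀ ⦃u v⦄, G.Adj u v → t u v = s u v)
    (p : G.Walk u v) : walkSign t (p.mapLe hle) = walkSign s p := by
  induction p with
  | nil => rfl
  | cons h p ih => simp [Walk.mapLe, hst h, ← ih]

end WalkSign

/-- `f` switches `s` to the all-positive signature on `G` (Harary's characterisation of
balance). -/
def IsPotential (G : SimpleGraph V) (s : V → V → ℤ) (f : V → ℤ) : Prop :=
  (∀ v, IsUnit (f v)) ∧ ∀ ⦃u v⦄, G.Adj u v → s u v = f u * f v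

namespace IsPotential

variable {G : SimpleGraph V} {s : V → V → ℤ} {f : V → ℤ}

theorem walkSign_eq (hf : IsPotential G s f) {u v : V} (p : G.Walk u v) :
    walkSign s p = f u * f v := by
  induction p with
  | nil => exact (Int.isUnit_mul_self (hf.1 _)).symm
  | @cons u w v h p ih =>
    rw [walkSign_cons, hf.2 h, ih]
    linear_combination f u * f v * Int.isUnit_mul_self (hf.1 w)

theorem sBalanced (hf : IsPotential G s f) : SBalanced G s :=
  fun u p _ => (hf.walkSign_eq p).trans (Int.isUnit_mul_self (hf.1 u))

end IsPotential

theorem exists_isPotential_of_walkSign_closed {G : SimpleGraph V} {s : V → V → ℤ}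
    (hconn : G.Connected) (hsym : ∀ u v, s u v = s v u)
    (hs : ∀ ⦃u v⦄, G.Adj u v → IsUnit (s u v))
    (hclosed : ∀ ⦃u⦄ (p : G.Walk u u), walkSign s p = 1) : ∃ f, IsPotential G s f := by
  obtain ⟨v₀⟩ := hconn.nonempty
  let w : ∀ v, G.Walk v₀ v := fun v => (hconn.preconnected v₀ v).some
  refine ⟨fun v => walkSign s (w v), fun v => isUnit_walkSign hs _, fun a b hab => ?_⟩
  have hcycle := hclosed ((w a).append (Walk.cons hab (w b).reverse))
  rw [walkSign_append, walkSign_cons, walkSign_reverse hsym] at hcycle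
  linear_combination (walkSign s (w a) * walkSign s (w b)) * hcycle
    - s a b * walkSign s (w b) * walkSign s (w b) * Int.isUnit_mul_self (isUnit_walkSign hs _)
    - s a b * Int.isUnit_mul_self (isUnit_walkSign hs (w b))

theorem isPotential_of_mul_eq {G : SimpleGraph V} {s : V → V → ℤ}
    (hsym : ∀ u v, s u v = s v u) (htri : ∀ u v w, s u w * s w v = s u v) {v₀ : V}
    (hv₀ : s v₀ v₀ = 1) :
    IsPotential G s (s v₀ ·) := by
  refine ⟨fun v => .of_mul_eq_one (s v v₀) ?_, fun a b _ => ?_⟩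
  · rw [htri, hv₀]
  · rw [← htri a b v₀, hsym a v₀]

section Balanced

variable [DecidableEq V] {G : SimpleGraph V} {s : V → V → ℤ}

theorem SBalanced.walkSign_cons_of_isPath (hbal : SBalanced G s)
    (hs : ∀ ⦃u v⦄, G.Adj u v → s u v * s v u = 1) {u w : V} (h : G.Adj u w) (p : G.Walk w u)
    (hp : p.IsPath) : walkSign s (Walk.cons h p) = 1 := by
  by_cases he : s(u, w) ∈ p.edges
  · have hlen := hp.length_eq_one_of_mem_edges (Sym2.eq_swap ▸ he)
    cases p with
    | nil => exact absurd h (G.loopless.irrefl u)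
    | cons h' p' =>
      cases p' with
      | nil => simpa using hs h
      | cons => simp at hlen
  · exact hbal _ ((Walk.cons_isCycle_iff p h).mpr ⟨hp, he⟩)

theorem SBalanced.walkSign_bypass (hbal : SBalanced G s)
    (hs : ∀ ⦃u v⦄, G.Adj u v → s u v * s v u = 1) {u v : V} (p : G.Walk u v) :
    walkSign s p.bypass = walkSign s p := by
  induction p with
  | nil => rfl
  | @cons u w v h q ih =>
    rw [Walk.bypass]
    split_ifs with hu
    · -- the detour `u → w ⇝ u` cut out by `bypass` is a backtrack or a cycle
      have hloop := hbal.walkSign_cons_of_isPath hs h _ (q.bypass_isPath.takeUntil hu)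
      rw [walkSign_cons] at hloop
      conv_rhs => rw [walkSign_cons, ← ih, ← q.bypass.take_spec hu, walkSign_append,
        ← mul_assoc, hloop, one_mul]
    · rw [walkSign_cons, walkSign_cons, ih]

end Balanced

theorem SBalanced.walkSign_closed {G : SimpleGraph V} {s : V → V → ℤ} (hbal : SBalanced G s)
    (hs : ∀ ⦃u v⦄, G.Adj u v → s u v * s v u = 1) {u : V} (p : G.Walk u u) :
    walkSign s p = 1 := by
  classical
  rw [← hbal.walkSign_bypass hs, (Walk.isPath_iff_nil.mp p.bypass_isPath).eq_nil, walkSign_nil]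

section ShortestPathSign

variable {G : SimpleGraph V} {sg : V → V → ℤ}

theorem sigmaMax_self (u : V) : sigmaMax G sg u u = 1 :=
  if_pos ⟨Walk.nil, by simp, rfl⟩

theorem isUnit_sigmaMax (u v : V) : IsUnit (sigmaMax G sg u v) := by
  unfold sigmaMax
  split_ifs <;> simp

theorem sigmaMax_eq_walkSign (hval : ∀ ⦃u v⦄, G.Adj u v → IsUnit (sg u v)) {u v : V}
    (hcomp : pairCompatible G sg u v) (p : G.Walk u v) (hp : p.length = G.dist u v) :
    sigmaMax G sg u v = walkSign sg p := by
  unfold sigmaMax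
  split_ifs with hpos
  · obtain ⟨q, hq, hq1⟩ := hpos
    rw [hcomp p q hp hq, hq1]
  · exact ((Int.isUnit_eq_one_or (isUnit_walkSign hval p)).resolve_left
      fun h => hpos ⟨p, hp, h⟩).symm

theorem sigmaMax_of_adj (hval : ∀ ⦃u v⦄, G.Adj u v → IsUnit (sg u v))
    (hcomp : ∀ u v, pairCompatible G sg u v) {u v : V} (h : G.Adj u v) :
    sigmaMax G sg u v = sg u v := by
  rw [sigmaMax_eq_walkSign hval (hcomp u v) h.toWalk (by simp [dist_eq_one_iff_adj.mpr h])]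
  simp

theorem kSigMax_eq_sigmaMax (hval : ∀ ⦃u v⦄, G.Adj u v → IsUnit (sg u v))
    (hcomp : ∀ u v, pairCompatible G sg u v) (u v : V) :
    kSigMax G sg u v = sigmaMax G sg u v := by
  unfold kSigMax
  split_ifs with h
  · exact (sigmaMax_of_adj hval hcomp h).symm
  · rfl

theorem sigmaMax_comm (hval : ∀ ⦃u v⦄, G.Adj u v → IsUnit (sg u v))
    (hcomp : ∀ u v, pairCompatible G sg u v) (hconn : G.Connected)
    (hsym : ∀ u v, sg u v = sg v u) (u v : V) : sigmaMax G sg u v = sigmaMax G sg v u := by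
  obtain ⟨p, hp⟩ := (hconn.preconnected u v).exists_walk_length_eq_dist
  rw [sigmaMax_eq_walkSign hval (hcomp u v) p hp, ← walkSign_reverse hsym,
    sigmaMax_eq_walkSign hval (hcomp v u) p.reverse
      (by rw [Walk.length_reverse, hp, dist_comm])]

theorem IsPotential.sigmaMax_eq {f : V → ℤ} (hf : IsPotential G sg f)
    (hval : ∀ ⦃u v⦄, G.Adj u v → IsUnit (sg u v)) (hcomp : ∀ u v, pairCompatible G sg u v)
    (hconn : G.Connected) (u v : V) : sigmaMax G sg u v = f u * f v := by
  obtain ⟨p, hp⟩ := (hconn.preconnected u v).exists_walk_length_eq_dist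
  rw [sigmaMax_eq_walkSign hval (hcomp u v) p hp, hf.walkSign_eq]

theorem exists_isPotential_of_sBalanced_powerGraph
    (hval : ∀ ⦃u v⦄, G.Adj u v → IsUnit (sg u v)) (hcomp : ∀ u v, pairCompatible G sg u v)
    (hconn : G.Connected) (hsym : ∀ u v, sg u v = sg v u) {n : ℕ} (hn : 1 ≤ n)
    (hbal : SBalanced (powerGraph G n) (sigmaMax G sg)) : ∃ f, IsPotential G sg f := by
  have hle : G ≤ powerGraph G n := fun u v h =>
    ⟨h.ne, (dist_eq_one_iff_adj.mpr h).le.trans hn⟩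
  have hinv : ∀ ⦃u v⦄, (powerGraph G n).Adj u v → sigmaMax G sg u v * sigmaMax G sg v u = 1 :=
    fun u v _ => by
      rw [sigmaMax_comm hval hcomp hconn hsym u v, Int.isUnit_mul_self (isUnit_sigmaMax v u)]
  refine exists_isPotential_of_walkSign_closed hconn hsym hval fun u p => ?_
  rw [← walkSign_mapLe hle (fun _ _ h => sigmaMax_of_adj hval hcomp h)]
  exact hbal.walkSign_closed hinv _

end ShortestPathSign

section SpectralFacts

variable {n : Type*} [Fintype n] [DecidableEq n]

theorem Matrix.charpoly_vecMulVec_sub_one {R : Type*} [CommRing R] [Nonempty n]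
    (u v : n → R) :
    (vecMulVec u v - 1).charpoly = (X - C (u ⬝ᵥ v - 1)) * (X + C 1) ^ (Fintype.card n - 1) := by
  obtain ⟨k, hk⟩ := Nat.exists_eq_add_one.mpr (Fintype.card_pos (α := n))
  rw [← map_one (scalar n), charpoly_sub_scalar, charpoly_vecMulVec, hk]
  simp only [smul_eq_C_mul, sub_comp, mul_comp, pow_comp, X_comp, C_comp, add_tsub_cancel_right,
    pow_succ, map_sub, map_one]
  ring

theorem Matrix.IsHermitian.aeval_eq_zero_of_isRoot {A : Matrix n n ℝ} (hA : A.IsHermitian)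
    {p : ℝ[X]} (hp : ∀ μ, A.charpoly.IsRoot μ → p.IsRoot μ) : aeval A p = 0 := by
  have : IsSelfAdjoint A := hA.isSelfAdjoint
  rw [← cfc_polynomial p A, ← cfc_zero ℝ A]
  exact cfc_congr fun μ hμ => hp μ (mem_spectrum_iff_isRoot_charpoly.mp hμ)

theorem Matrix.IsHermitian.mul_self_eq_card_smul {A : Matrix n n ℝ} (hA : A.IsHermitian)
    (h : (A - 1).charpoly =
      (X - C ((Fintype.card n : ℝ) - 1)) * (X + C 1) ^ (Fintype.card n - 1)) :
    A * A = (Fintype.card n : ℝ) • A := by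
  have hroot : ∀ μ, (A - 1).charpoly.IsRoot μ →
      ((X - C ((Fintype.card n : ℝ) - 1)) * (X + C 1)).IsRoot μ := fun μ hμ => by
    simp only [IsRoot, h, eval_mul, eval_pow, eval_sub, eval_add, eval_X, eval_C] at hμ ⊢
    rcases mul_eq_zero.mp hμ with h₁ | h₁
    · rw [h₁, zero_mul]
    · rw [eq_zero_of_pow_eq_zero h₁, mul_zero]
  have h0 := (hA.sub isHermitian_one).aeval_eq_zero_of_isRoot hroot
  simp only [map_mul, map_sub, map_add, aeval_X, aeval_C, Algebra.algebraMap_eq_smul_one] at h0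
  rw [one_smul, sub_add_cancel] at h0
  rw [← sub_eq_zero, ← h0]
  noncomm_ring

end SpectralFacts

theorem mul_eq_of_sum_mul_eq_card_mul {ι : Type*} [Fintype ι] {ε : ι → ι → ℤ}
    (hε : ∀ i j, IsUnit (ε i j)) (h : ∀ i j, ∑ k, ε i k * ε k j = Fintype.card ι * ε i j)
    (i j k : ι) : ε i k * ε k j = ε i j := by
  have hle : ∀ k, ε i j * (ε i k * ε k j) ≤ 1 := fun k => by
    rcases Int.isUnit_eq_one_or ((hε i j).mul ((hε i k).mul (hε k j))) with hu | hu <;> omega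
  have hsum : ∑ k, ε i j * (ε i k * ε k j) = ∑ _k : ι, 1 := by
    rw [← Finset.mul_sum, h, Finset.sum_const, Finset.card_univ, nsmul_one, mul_left_comm,
      Int.isUnit_mul_self (hε i j), mul_one]
  exact (Int.eq_of_mul_eq_one ((Finset.sum_eq_sum_iff_of_le fun k _ => hle k).mp hsum k
    (Finset.mem_univ k))).symm

theorem power_balanced_iff_spectrum_general {V : Type*} [Fintype V] (G : SimpleGraph V) (sg : V → V → ℤ)
    (hconn : G.Connected) (hsym : ∀ u v, sg u v = sg v u)
    (hval : ∀ u v, G.Adj u v → sg u v = 1 ∨ sg u v = -1) [DecidableEq V]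
    (hcomp : ∀ u v : V, pairCompatible G sg u v)
    (n : ℕ) (hn : 1 ≤ n) :
    SBalanced (powerGraph G n) (sigmaMax G sg) ↔
      ((Matrix.of fun u v : V => if u = v then (0 : ℝ) else (kSigMax G sg u v : ℝ)).charpoly =
      (X - C ((Fintype.card V : ℝ) - 1)) * (X + C 1) ^ (Fintype.card V - 1)) := by
  have hunit : ∀ ⦃u v⦄, G.Adj u v → IsUnit (sg u v) := fun u v h =>
    Int.isUnit_iff.mpr (hval u v h)
  set M : Matrix V V ℝ := Matrix.of fun u v => (sigmaMax G sg u v : ℝ)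
  have hA : (Matrix.of fun u v : V => if u = v then (0 : ℝ) else (kSigMax G sg u v : ℝ)) =
      M - 1 := by
    ext u v
    by_cases h : u = v <;> simp [M, h, kSigMax_eq_sigmaMax hunit hcomp, sigmaMax_self]
  rw [hA]
  constructor
  · intro hbal
    obtain ⟨f, hf⟩ := exists_isPotential_of_sBalanced_powerGraph hunit hcomp hconn hsym hn hbal
    have : Nonempty V := hconn.nonempty
    have hM : M = vecMulVec (fun v => (f v : ℝ)) (fun v => (f v : ℝ)) := by
      ext u v
      simp [M, hf.sigmaMax_eq hunit hcomp hconn, vecMulVec_apply]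
    have hdot : (fun v => (f v : ℝ)) ⬝ᵥ (fun v => (f v : ℝ)) = Fintype.card V := by
      simp [dotProduct, ← Int.cast_mul, Int.isUnit_mul_self (hf.1 _)]
    rw [hM, charpoly_vecMulVec_sub_one, hdot]
  · intro hcp
    obtain ⟨v₀⟩ := hconn.nonempty
    have hcomm := sigmaMax_comm hunit hcomp hconn hsym
    have hMsymm : M.IsHermitian := by
      ext u v
      simp [M, hcomm]
    have hsq := hMsymm.mul_self_eq_card_smul hcp
    have hsum : ∀ u v, ∑ w, sigmaMax G sg u w * sigmaMax G sg w v =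
        Fintype.card V * sigmaMax G sg u v := fun u v => by
      have := congrFun (congrFun hsq u) v
      simp only [M, mul_apply, Matrix.smul_apply, of_apply, smul_eq_mul] at this
      exact_mod_cast this
    exact (isPotential_of_mul_eq hcomm (mul_eq_of_sum_mul_eq_card_mul isUnit_sigmaMax hsum)
      (sigmaMax_self v₀)).sBalanced

theorem power_balanced_iff_spectrum {V : Type*} [Fintype V] (G : SimpleGraph V) (sg : V → V → ℤ)
    (hconn : G.Connected) (hsym : ∀ u v, sg u v = sg v u)
    (hval : ∀ u v, G.Adj u v → sg u v = 1 ∨ sg u v = -1) [DecidableEq V]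
    (h2 : TwoConnected G) (hcomp : ∀ u v : V, pairCompatible G sg u v)
    (n : ℕ) (hn : 1 ≤ n) :
    SBalanced (powerGraph G n) (sigmaMax G sg) ↔
      ((Matrix.of fun u v : V => if u = v then (0 : ℝ) else (kSigMax G sg u v : ℝ)).charpoly =
      (X - C ((Fintype.card V : ℝ) - 1)) * (X + C 1) ^ (Fintype.card V - 1)) :=
  power_balanced_iff_spectrum_general G sg hconn hsym hval hcomp n hn
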